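/- Let a ∈ ℝ with a ≠ 0. Then there exists a finite constant C = C(a) such that for all λ > 0 and all v, w ∈ [0,1], 64·a²·sin²(πv)·sin²(πw)·sin²(π(v+w)) · 4·a²·sin²(2π(v+w)) ≤ C·( 4·a²·sin²(2π(v+w)) + (λ + 2·sin²(π(v+w)))² )² · ( λ + 2·sin²(πv) + 2·sin²(πw) ). -/
import Mathlib


open Real

lemma key_ineq (a lam x y s : ℝ) (ha2 : 0 < a ^ 2) (hl : 0 < lam)
    (hx0 : 0 ≤ x) (hx1 : x ≤ 1) (hy0 : 0 ≤ y) (hy1 : y ≤ 1)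
    (hs0 : 0 ≤ s) (hs1 : s ≤ 1) (hS : s ≤ 2 * (x + y)) :
    64 * a ^ 2 * x * y * s * (4 * a ^ 2 * (4 * s * (1 - s))) ≤
      (16 * a ^ 2 + 4) * (4 * a ^ 2 * (4 * s * (1 - s)) + (lam + 2 * s) ^ 2) ^ 2 *
        (lam + 2 * x + 2 * y) := by
  obtain ⟨A, hAdef⟩ : ∃ A : ℝ, A = 4 * a ^ 2 * (4 * s * (1 - s)) := ⟨_, rfl⟩
  rw [← hAdef]
  obtain ⟨D, hDdef⟩ : ∃ D : ℝ, D = A + (lam + 2 * s) ^ 2 := ⟨_, rfl⟩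
  rw [← hDdef]
  obtain ⟨L, hLdef⟩ : ∃ L : ℝ, L = lam + 2 * x + 2 * y := ⟨_, rfl⟩
  rw [← hLdef]
  have hA0 : 0 ≤ A := by
    have : 0 ≤ a ^ 2 * (s * (1 - s)) :=
      mul_nonneg ha2.le (mul_nonneg hs0 (by linarith))
    rw [hAdef]; nlinarith [this]
  have hL0 : 0 ≤ L := by rw [hLdef]; linarith
  have hD2 : A ^ 2 ≤ D ^ 2 := by
    rw [hDdef]; nlinarith [sq_nonneg (lam + 2 * s), hA0]
  rcases le_or_gt s (1 / 2) with hcase | hcase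
  · -- s ≤ 1/2 : A ≥ 8 a^2 s
    have hA8 : 8 * a ^ 2 * s ≤ A := by
      rw [hAdef]
      nlinarith [mul_nonneg (mul_nonneg ha2.le hs0) (show (0:ℝ) ≤ 1 - 2 * s by linarith)]
    calc 64 * a ^ 2 * x * y * s * A = (8 * x * y * A) * (8 * a ^ 2 * s) := by ring
      _ ≤ (8 * x * y * A) * A := by
          apply mul_le_mul_of_nonneg_left hA8 (by positivity)
      _ ≤ 8 * x * A ^ 2 := by
          nlinarith [mul_nonneg (mul_nonneg hx0 (sq_nonneg A)) (show (0:ℝ) ≤ 1 - y by linarith)]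
      _ ≤ 8 * x * D ^ 2 := by
          nlinarith [mul_nonneg hx0 (sub_nonneg.2 hD2)]
      _ ≤ (16 * a ^ 2 + 4) * D ^ 2 * L := by
          have h1 : 0 ≤ D ^ 2 * (L - 2 * x) := mul_nonneg (sq_nonneg D) (by rw [hLdef]; linarith)
          have h2 : 0 ≤ a ^ 2 * (D ^ 2 * L) := mul_nonneg ha2.le (mul_nonneg (sq_nonneg D) hL0)
          nlinarith [h1, h2]
  · -- s > 1/2
    have h8 : 8 * A * s ≤ D ^ 2 := by
      have h1 : 0 ≤ (lam + 2 * s) ^ 2 - 2 * s := by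
        nlinarith [mul_nonneg hs0 (show (0:ℝ) ≤ 2 * s - 1 by linarith), sq_nonneg lam,
          mul_nonneg hl.le hs0]
      have h2 : 0 ≤ (A - (lam + 2 * s) ^ 2) ^ 2 := sq_nonneg _
      have h3 : 0 ≤ A * ((lam + 2 * s) ^ 2 - 2 * s) := mul_nonneg hA0 h1
      rw [hDdef]; nlinarith [h2, h3]
    have hxy : x * y ≤ 1 := by nlinarith
    calc 64 * a ^ 2 * x * y * s * A ≤ 64 * a ^ 2 * s * A := by
          have h0 : 0 ≤ 64 * a ^ 2 * s * A * (1 - x * y) :=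
            mul_nonneg (mul_nonneg (mul_nonneg
              (mul_nonneg (by norm_num : (0:ℝ) ≤ 64) ha2.le) hs0) hA0) (by linarith)
          have he : 64 * a ^ 2 * s * A - 64 * a ^ 2 * x * y * s * A =
              64 * a ^ 2 * s * A * (1 - x * y) := by ring
          linarith [h0, he.ge]
      _ ≤ 128 * a ^ 2 * A * s ^ 2 := by
          have h0 : 0 ≤ 64 * (a ^ 2 * A * s) * (2 * s - 1) :=
            mul_nonneg (mul_nonneg (by norm_num : (0:ℝ) ≤ 64)
              (mul_nonneg (mul_nonneg ha2.le hA0) hs0)) (by linarith)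
          have he : 128 * a ^ 2 * A * s ^ 2 - 64 * a ^ 2 * s * A =
              64 * (a ^ 2 * A * s) * (2 * s - 1) := by ring
          linarith [h0]
      _ ≤ 16 * a ^ 2 * (8 * A * s) * L := by
          have h0 : 0 ≤ 128 * (a ^ 2 * A * s) * (L - s) :=
            mul_nonneg (mul_nonneg (by norm_num : (0:ℝ) ≤ 128)
              (mul_nonneg (mul_nonneg ha2.le hA0) hs0)) (by rw [hLdef]; linarith)
          have he : 16 * a ^ 2 * (8 * A * s) * L - 128 * a ^ 2 * A * s ^ 2 =
              128 * (a ^ 2 * A * s) * (L - s) := by ring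
          linarith [h0]
      _ ≤ 16 * a ^ 2 * D ^ 2 * L := by
          have h0 : 0 ≤ 16 * (a ^ 2 * (D ^ 2 - 8 * A * s)) * L :=
            mul_nonneg (mul_nonneg (by norm_num : (0:ℝ) ≤ 16)
              (mul_nonneg ha2.le (by linarith))) hL0
          have he : 16 * a ^ 2 * D ^ 2 * L - 16 * a ^ 2 * (8 * A * s) * L =
              16 * (a ^ 2 * (D ^ 2 - 8 * A * s)) * L := by ring
          linarith [h0]
      _ ≤ (16 * a ^ 2 + 4) * D ^ 2 * L := by
          have h0 : 0 ≤ 4 * D ^ 2 * L :=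
            mul_nonneg (mul_nonneg (by norm_num : (0:ℝ) ≤ 4) (sq_nonneg D)) hL0
          linarith [h0]

theorem stmt_15 (a : ℝ) (ha : a ≠ 0) :
    ∃ C : ℝ, ∀ lam : ℝ, 0 < lam → ∀ v w : ℝ,
      v ∈ Set.Icc (0 : ℝ) 1 → w ∈ Set.Icc (0 : ℝ) 1 →
      64 * a ^ 2 * Real.sin (π * v) ^ 2 * Real.sin (π * w) ^ 2 *
            Real.sin (π * (v + w)) ^ 2 * (4 * a ^ 2 * Real.sin (2 * π * (v + w)) ^ 2) ≤
        C * (4 * a ^ 2 * Real.sin (2 * π * (v + w)) ^ 2 +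
              (lam + 2 * Real.sin (π * (v + w)) ^ 2) ^ 2) ^ 2 *
          (lam + 2 * Real.sin (π * v) ^ 2 + 2 * Real.sin (π * w) ^ 2) := by
  refine ⟨16 * a ^ 2 + 4, ?_⟩
  intro lam hl v w _ _
  have ha2 : 0 < a ^ 2 := by positivity
  have hx0 : (0:ℝ) ≤ Real.sin (π * v) ^ 2 := sq_nonneg _
  have hx1 : Real.sin (π * v) ^ 2 ≤ 1 := by
    nlinarith [Real.neg_one_le_sin (π * v), Real.sin_le_one (π * v)]
  have hy0 : (0:ℝ) ≤ Real.sin (π * w) ^ 2 := sq_nonneg _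
  have hy1 : Real.sin (π * w) ^ 2 ≤ 1 := by
    nlinarith [Real.neg_one_le_sin (π * w), Real.sin_le_one (π * w)]
  have hs0 : (0:ℝ) ≤ Real.sin (π * (v + w)) ^ 2 := sq_nonneg _
  have hs1 : Real.sin (π * (v + w)) ^ 2 ≤ 1 := by
    nlinarith [Real.neg_one_le_sin (π * (v + w)), Real.sin_le_one (π * (v + w))]
  have h2s : Real.sin (2 * π * (v + w)) ^ 2 =
      4 * Real.sin (π * (v + w)) ^ 2 * (1 - Real.sin (π * (v + w)) ^ 2) := by
    have hpy := Real.sin_sq_add_cos_sq (π * (v + w))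
    rw [show 2 * π * (v + w) = 2 * (π * (v + w)) by ring, Real.sin_two_mul]
    nlinarith [hpy]
  have hS : Real.sin (π * (v + w)) ^ 2 ≤
      2 * (Real.sin (π * v) ^ 2 + Real.sin (π * w) ^ 2) := by
    have hadd : Real.sin (π * (v + w)) =
        Real.sin (π * v) * Real.cos (π * w) + Real.cos (π * v) * Real.sin (π * w) := by
      rw [show π * (v + w) = π * v + π * w by ring, Real.sin_add]
    have h1 := Real.sin_sq_add_cos_sq (π * v)
    have h2 := Real.sin_sq_add_cos_sq (π * w)
    rw [hadd]
    nlinarith [sq_nonneg (Real.sin (π * v) * Real.cos (π * w) -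
        Real.cos (π * v) * Real.sin (π * w)),
      sq_nonneg (Real.sin (π * v) * Real.sin (π * w)),
      sq_nonneg (Real.cos (π * v) * Real.cos (π * w)),
      sq_nonneg (Real.sin (π * v)), sq_nonneg (Real.sin (π * w)),
      mul_nonneg (sq_nonneg (Real.sin (π * v))) (sq_nonneg (Real.sin (π * w))),
      mul_nonneg (sq_nonneg (Real.cos (π * v))) (sq_nonneg (Real.sin (π * w))),
      mul_nonneg (sq_nonneg (Real.sin (π * v))) (sq_nonneg (Real.cos (π * w)))]
  rw [h2s]
  have := key_ineq a lam (Real.sin (π * v) ^ 2) (Real.sin (π * w) ^ 2)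
    (Real.sin (π * (v + w)) ^ 2) ha2 hl hx0 hx1 hy0 hy1 hs0 hs1 (by linarith)
  linarith [this]
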